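/- Let (X,μ) be a probability measure space and (Y,d) a Hadamard (complete CAT(0)) space. For an essentially bounded measurable map f: X → Y let c_f denote the center of mass of the pushforward measure f_*μ, i.e., the unique minimizer of x ↦ ∫_Y d(x,y)² d(f_*μ)(y). Then for any two essentially bounded measurable maps f, g: X → Y, d(c_f, c_g) ≤ ∫_X d(f(x), g(x)) dμ(x). -/

import Mathlib

/-!
In a CAT(0) space the quasilinearization `⟨ab, cd⟩` obeys the Cauchy–Schwarz inequality
`⟨ab, cd⟩ ≤ d(a, b) d(c, d)` of Berg and Nikolaev. The CAT(0) inequality at midpoints gives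
`2⟨ab, cd⟩ ≤ d(a, b)² + d(c, d)²`; since `⟨ab, cd⟩` is additive in each segment, cutting `ab`
into `n` and `cd` into `k` equal pieces improves this to
`2⟨ab, cd⟩ ≤ (k / n) d(a, b)² + (n / k) d(c, d)²`, and `k / n → d(c, d) / d(a, b)` gives the claim.

The barycenter `c` of `h_*μ` satisfies the variance inequality
`d(c, z)² + ∫ d(c, h)² ≤ ∫ d(z, h)²`: compare `c` with the points of the geodesic from `c` to `z`
near `c`. Adding the variance inequalities for `(cf, cg)` and `(cg, cf)` and integrating the
Cauchy–Schwarz inequality for `⟨cf cg, f(x) g(x)⟩` yields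
`d(cf, cg)² ≤ d(cf, cg) ∫ d(f, g)`.
-/

open MeasureTheory Filter Topology

section Geometry

variable {Y : Type*} [MetricSpace Y]

structure IsGeodesicBicombing (geo : Y → Y → ℝ → Y) : Prop where
  apply_zero : ∀ a b, geo a b 0 = a
  apply_one : ∀ a b, geo a b 1 = b
  dist_apply_apply : ∀ a b : Y, ∀ s ∈ Set.Icc (0:ℝ) 1, ∀ t ∈ Set.Icc (0:ℝ) 1,
    dist (geo a b s) (geo a b t) = |s - t| * dist a b

def CATZeroInequality (geo : Y → Y → ℝ → Y) : Prop :=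
  ∀ p a b : Y, ∀ t ∈ Set.Icc (0:ℝ) 1,
    dist p (geo a b t) ^ 2 ≤ (1 - t) * dist p a ^ 2 + t * dist p b ^ 2
      - t * (1 - t) * dist a b ^ 2

/-- The quasilinearization `⟨ab, cd⟩` of Berg and Nikolaev; in a Euclidean space it is the
inner product of the vectors `b - a` and `d - c`. -/
noncomputable def quasiInner (a b c d : Y) : ℝ :=
  (dist a d ^ 2 + dist b c ^ 2 - dist a c ^ 2 - dist b d ^ 2) / 2

lemma quasiInner_comm (a b c d : Y) : quasiInner a b c d = quasiInner c d a b := by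
  simp only [quasiInner, dist_comm]
  ring

lemma quasiInner_self_left (a c d : Y) : quasiInner a a c d = 0 := by
  simp only [quasiInner]
  ring

lemma quasiInner_sub_quasiInner_left (a y y' c d : Y) :
    quasiInner a y' c d - quasiInner a y c d = quasiInner y y' c d := by
  simp only [quasiInner]
  ring

variable {geo : Y → Y → ℝ → Y}

lemma IsGeodesicBicombing.dist_apply_div_apply_succ_div (hgeo : IsGeodesicBicombing geo)
    (a b : Y) {n i : ℕ} (hi : i < n) :
    dist (geo a b (i / n)) (geo a b ((i + 1) / n)) = dist a b / n := by
  have hn : (0:ℝ) < n := by exact_mod_cast (Nat.zero_le i).trans_lt hi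
  have hi' : (i:ℝ) + 1 ≤ n := by exact_mod_cast hi
  rw [hgeo.dist_apply_apply a b _ ⟨by positivity, by rw [div_le_one hn]; linarith⟩ _
    ⟨by positivity, by rwa [div_le_one hn]⟩, ← sub_div, abs_div, abs_of_pos hn]
  norm_num
  ring

lemma IsGeodesicBicombing.sub_le_mul_of_forall_dist_eq (hgeo : IsGeodesicBicombing geo)
    (F : Y → ℝ) (a b : Y) {n : ℕ} (hn : 0 < n) (B : ℝ)
    (hF : ∀ y y', dist y y' = dist a b / n → F y' - F y ≤ B) :
    F b - F a ≤ n * B := by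
  have htele := Finset.sum_range_sub (fun i : ℕ => F (geo a b (i / n))) n
  push_cast at htele
  rw [div_self (by positivity), zero_div, hgeo.apply_zero, hgeo.apply_one] at htele
  calc F b - F a
      = ∑ i ∈ Finset.range n, (F (geo a b ((i + 1) / n)) - F (geo a b (i / n))) := htele.symm
    _ ≤ ∑ _i ∈ Finset.range n, B := Finset.sum_le_sum fun i hi =>
        hF _ _ (hgeo.dist_apply_div_apply_succ_div a b (Finset.mem_range.mp hi))
    _ = n * B := by simp

lemma two_mul_quasiInner_le_of_forall (hgeo : IsGeodesicBicombing geo) (c d : Y) {α β : ℝ}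
    (h : ∀ x y, 2 * quasiInner x y c d ≤ α * dist x y ^ 2 + β) (a b : Y) {n : ℕ} (hn : 0 < n) :
    2 * quasiInner a b c d ≤ α * dist a b ^ 2 / n + n * β := by
  have hstep := hgeo.sub_le_mul_of_forall_dist_eq (fun y => 2 * quasiInner a y c d) a b hn
    (α * (dist a b / n) ^ 2 + β) fun y y' hyy' => by
      rw [← mul_sub, quasiInner_sub_quasiInner_left, ← hyy']
      exact h y y'
  have hn' : (n:ℝ) ≠ 0 := by positivity
  rw [quasiInner_self_left, mul_zero, sub_zero] at hstep
  convert hstep using 1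
  field_simp

lemma two_mul_quasiInner_le_dist_sq_add_dist_sq (hcat : CATZeroInequality geo) (a b c d : Y) :
    2 * quasiInner a b c d ≤ dist a b ^ 2 + dist c d ^ 2 := by
  have hhalf : (1/2 : ℝ) ∈ Set.Icc (0:ℝ) 1 := by norm_num
  -- the CAT(0) inequality for the midpoint `m` of `ad` seen from `b` and `c`, and for the
  -- midpoint of `bc` seen from `m`
  have h1 := hcat b a d (1/2) hhalf
  have h2 := hcat c a d (1/2) hhalf
  have h3 := hcat (geo a d (1/2)) b c (1/2) hhalf
  have h0 := sq_nonneg (dist (geo a d (1/2)) (geo b c (1/2)))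
  simp only [quasiInner, dist_comm] at *
  linarith

lemma le_two_mul_of_forall_nat {x A C : ℝ} (hA : 0 < A) (hC : 0 < C)
    (h : ∀ n k : ℕ, 0 < n → 0 < k → x ≤ n * C ^ 2 / k + k * (A ^ 2 / n)) :
    x ≤ 2 * A * C := by
  set r : ℕ → ℝ := fun n => ⌈C / A * n⌉₊ / n
  have hr : Tendsto r atTop (𝓝 (C / A)) :=
    (tendsto_nat_ceil_mul_div_atTop (by positivity)).comp tendsto_natCast_atTop_atTop
  have hlim : Tendsto (fun n => C ^ 2 / r n + r n * A ^ 2) atTop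
      (𝓝 (C ^ 2 / (C / A) + C / A * A ^ 2)) :=
    (tendsto_const_nhds.div hr (by positivity)).add (hr.mul_const _)
  rw [show C ^ 2 / (C / A) + C / A * A ^ 2 = 2 * A * C by field_simp; ring] at hlim
  refine ge_of_tendsto hlim (eventually_atTop.2 ⟨1, fun n hn => ?_⟩)
  have hk : 0 < ⌈C / A * n⌉₊ := Nat.ceil_pos.2 (by positivity)
  refine (h n _ hn hk).trans_eq ?_
  simp only [r]
  field_simp

lemma quasiInner_le_dist_mul_dist (hgeo : IsGeodesicBicombing geo) (hcat : CATZeroInequality geo)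
    (a b c d : Y) : quasiInner a b c d ≤ dist a b * dist c d := by
  rcases (dist_nonneg : 0 ≤ dist a b).eq_or_lt with hab | hab
  · rw [dist_eq_zero.1 hab.symm, quasiInner_self_left, dist_self, zero_mul]
  rcases (dist_nonneg : 0 ≤ dist c d).eq_or_lt with hcd | hcd
  · rw [quasiInner_comm, dist_eq_zero.1 hcd.symm, quasiInner_self_left, dist_self, mul_zero]
  have hsplit_ab (n : ℕ) (hn : 0 < n) (u v : Y) :
      2 * quasiInner a b u v ≤ dist a b ^ 2 / n + n * dist u v ^ 2 := by
    have := two_mul_quasiInner_le_of_forall hgeo u v (α := 1)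
      (fun x y => by simpa using two_mul_quasiInner_le_dist_sq_add_dist_sq hcat x y u v) a b hn
    rwa [one_mul] at this
  have hsplit_both (n k : ℕ) (hn : 0 < n) (hk : 0 < k) :
      2 * quasiInner a b c d ≤ n * dist c d ^ 2 / k + k * (dist a b ^ 2 / n) := by
    rw [quasiInner_comm]
    refine two_mul_quasiInner_le_of_forall hgeo a b (fun x y => ?_) c d hk
    rw [quasiInner_comm]
    linarith [hsplit_ab n hn x y]
  linarith [le_two_mul_of_forall_nat hab hcd hsplit_both]

end Geometry

section Barycenter

variable {X Y : Type*} [MeasurableSpace X] [MetricSpace Y] {μ : Measure X}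

lemma integrable_dist_sq_of_isBounded_range [IsFiniteMeasure μ] {h : X → Y}
    (hm : AEStronglyMeasurable h μ) (hb : Bornology.IsBounded (Set.range h)) (z : Y) :
    Integrable (fun x => dist z (h x) ^ 2) μ := by
  obtain ⟨C, hC⟩ := Metric.isBounded_iff.1 (hb.insert z)
  refine Integrable.of_bound ((aestronglyMeasurable_const.dist hm).pow 2) (C ^ 2)
    (ae_of_all _ fun x => ?_)
  rw [Real.norm_of_nonneg (by positivity)]
  exact pow_le_pow_left₀ dist_nonneg
    (hC (Set.mem_insert _ _) (Set.mem_insert_of_mem _ (Set.mem_range_self x))) 2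

lemma integrable_dist_of_isBounded_range [IsFiniteMeasure μ] {f g : X → Y}
    (hf : AEStronglyMeasurable f μ) (hg : AEStronglyMeasurable g μ)
    (hfb : Bornology.IsBounded (Set.range f)) (hgb : Bornology.IsBounded (Set.range g)) :
    Integrable (fun x => dist (f x) (g x)) μ := by
  obtain ⟨C, hC⟩ := Metric.isBounded_iff.1 (hfb.union hgb)
  refine Integrable.of_bound (hf.dist hg) C (ae_of_all _ fun x => ?_)
  rw [Real.norm_of_nonneg dist_nonneg]
  exact hC (Or.inl (Set.mem_range_self x)) (Or.inr (Set.mem_range_self x))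

variable {geo : Y → Y → ℝ → Y}

lemma dist_sq_add_integral_dist_sq_le [IsProbabilityMeasure μ] (hcat : CATZeroInequality geo)
    {h : X → Y} (hint : ∀ w, Integrable (fun x => dist w (h x) ^ 2) μ) {c : Y}
    (hc : ∀ w, ∫ x, dist c (h x) ^ 2 ∂μ ≤ ∫ x, dist w (h x) ^ 2 ∂μ) (z : Y) :
    dist c z ^ 2 + ∫ x, dist c (h x) ^ 2 ∂μ ≤ ∫ x, dist z (h x) ^ 2 ∂μ := by
  set V : Y → ℝ := fun w => ∫ x, dist w (h x) ^ 2 ∂μ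
  have hV_geo (t : ℝ) (ht : t ∈ Set.Icc (0:ℝ) 1) :
      V (geo c z t) ≤ (1 - t) * V c + t * V z - t * (1 - t) * dist c z ^ 2 := by
    have hsum : Integrable (fun x => (1 - t) * dist c (h x) ^ 2 + t * dist z (h x) ^ 2) μ :=
      ((hint c).const_mul (1 - t)).add ((hint z).const_mul t)
    have hrhs : Integrable (fun x => (1 - t) * dist c (h x) ^ 2 + t * dist z (h x) ^ 2
        - t * (1 - t) * dist c z ^ 2) μ := hsum.sub (integrable_const _)
    have := integral_mono (hint _) hrhs fun x => by simpa only [dist_comm] using hcat (h x) c z t ht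
    rwa [integral_sub hsum (integrable_const _), integral_add ((hint c).const_mul _)
      ((hint z).const_mul _), integral_const_mul, integral_const_mul, integral_const,
      probReal_univ, one_smul] at this
  have hstep (t : ℝ) (ht : t ∈ Set.Ioc (0:ℝ) 1) : (1 - t) * dist c z ^ 2 + V c ≤ V z := by
    have hgeo_t := hV_geo t (Set.Ioc_subset_Icc_self ht)
    have hmin := hc (geo c z t)
    refine le_of_mul_le_mul_left ?_ ht.1
    linarith
  have hlim : Tendsto (fun t : ℝ => (1 - t) * dist c z ^ 2 + V c) (𝓝[>] 0)
      (𝓝 ((1 - 0) * dist c z ^ 2 + V c)) :=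
    (Continuous.tendsto (by fun_prop) _).mono_left nhdsWithin_le_nhds
  rw [sub_zero, one_mul] at hlim
  exact le_of_tendsto hlim (eventually_of_mem (Ioc_mem_nhdsGT one_pos) hstep)

lemma integral_dist_sq_quadruple_le (hgeo : IsGeodesicBicombing geo)
    (hcat : CATZeroInequality geo) {f g : X → Y}
    (hf : ∀ z, Integrable (fun x => dist z (f x) ^ 2) μ)
    (hg : ∀ z, Integrable (fun x => dist z (g x) ^ 2) μ)
    (hfg : Integrable (fun x => dist (f x) (g x)) μ) (a b : Y) :
    ∫ x, dist a (g x) ^ 2 ∂μ + ∫ x, dist b (f x) ^ 2 ∂μ - ∫ x, dist a (f x) ^ 2 ∂μ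
      - ∫ x, dist b (g x) ^ 2 ∂μ ≤ 2 * dist a b * ∫ x, dist (f x) (g x) ∂μ := by
  have hsum : Integrable (fun x => dist a (g x) ^ 2 + dist b (f x) ^ 2) μ := (hg a).add (hf b)
  have hsum' : Integrable (fun x => dist a (g x) ^ 2 + dist b (f x) ^ 2 - dist a (f x) ^ 2) μ :=
    hsum.sub (hf a)
  rw [← integral_add (hg a) (hf b), ← integral_sub hsum (hf a), ← integral_sub hsum' (hg b),
    ← integral_const_mul]
  refine integral_mono (hsum'.sub (hg b)) (hfg.const_mul _) fun x => ?_
  have := quasiInner_le_dist_mul_dist hgeo hcat a b (f x) (g x)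
  simp only [quasiInner] at this
  linarith

end Barycenter

theorem center_of_mass_contractive_general {X Y : Type*} [MeasurableSpace X] [MetricSpace Y]
    (geo : Y → Y → ℝ → Y)
    (hgeo0 : ∀ a b, geo a b 0 = a)
    (hgeo1 : ∀ a b, geo a b 1 = b)
    (hgeodist : ∀ a b : Y, ∀ s ∈ Set.Icc (0:ℝ) 1, ∀ t ∈ Set.Icc (0:ℝ) 1,
      dist (geo a b s) (geo a b t) = |s - t| * dist a b)
    (hcat : ∀ p a b : Y, ∀ t ∈ Set.Icc (0:ℝ) 1,
      dist p (geo a b t) ^ 2 ≤ (1 - t) * dist p a ^ 2 + t * dist p b ^ 2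
        - t * (1 - t) * dist a b ^ 2)
    (μ : Measure X) [IsProbabilityMeasure μ]
    (f g : X → Y)
    (hf : AEStronglyMeasurable f μ) (hg : AEStronglyMeasurable g μ)
    (hfb : Bornology.IsBounded (Set.range f)) (hgb : Bornology.IsBounded (Set.range g))
    (cf cg : Y)
    (hcf : ∀ z : Y, (∫ x, dist cf (f x) ^ 2 ∂μ) ≤ ∫ x, dist z (f x) ^ 2 ∂μ)
    (hcg : ∀ z : Y, (∫ x, dist cg (g x) ^ 2 ∂μ) ≤ ∫ x, dist z (g x) ^ 2 ∂μ) :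
    dist cf cg ≤ ∫ x, dist (f x) (g x) ∂μ := by
  have hf2 := integrable_dist_sq_of_isBounded_range hf hfb
  have hg2 := integrable_dist_sq_of_isBounded_range hg hgb
  have hvar_f := dist_sq_add_integral_dist_sq_le hcat hf2 hcf cg
  have hvar_g := dist_sq_add_integral_dist_sq_le hcat hg2 hcg cf
  have hquad := integral_dist_sq_quadruple_le ⟨hgeo0, hgeo1, hgeodist⟩ hcat hf2 hg2
    (integrable_dist_of_isBounded_range hf hg hfb hgb) cf cg
  rw [dist_comm cg cf] at hvar_g
  have hsq : dist cf cg ^ 2 ≤ dist cf cg * ∫ x, dist (f x) (g x) ∂μ := by linarith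
  have hI : 0 ≤ ∫ x, dist (f x) (g x) ∂μ := integral_nonneg fun x => dist_nonneg
  nlinarith [dist_nonneg (x := cf) (y := cg)]

/-- Contractivity of the center of mass in a Hadamard (complete CAT(0)) space:
if `cf` and `cg` are the barycenters of the pushforward measures `f_*μ` and `g_*μ`
(i.e. the minimizers of `x ↦ ∫ d(x, f ω)² dμ(ω)` resp. for `g`), then
`d(cf, cg) ≤ ∫ d(f ω, g ω) dμ(ω)`. -/
theorem center_of_mass_contractive {X Y : Type*} [MeasurableSpace X]
    [MetricSpace Y] [CompleteSpace Y] [MeasurableSpace Y] [OpensMeasurableSpace Y]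
    (geo : Y → Y → ℝ → Y)
    (hgeo0 : ∀ a b, geo a b 0 = a)
    (hgeo1 : ∀ a b, geo a b 1 = b)
    (hgeodist : ∀ a b : Y, ∀ s ∈ Set.Icc (0:ℝ) 1, ∀ t ∈ Set.Icc (0:ℝ) 1,
      dist (geo a b s) (geo a b t) = |s - t| * dist a b)
    (hcat : ∀ p a b : Y, ∀ t ∈ Set.Icc (0:ℝ) 1,
      dist p (geo a b t) ^ 2 ≤ (1 - t) * dist p a ^ 2 + t * dist p b ^ 2
        - t * (1 - t) * dist a b ^ 2)
    (μ : Measure X) [IsProbabilityMeasure μ]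
    (f g : X → Y)
    (hf : AEStronglyMeasurable f μ) (hg : AEStronglyMeasurable g μ)
    (hfb : Bornology.IsBounded (Set.range f)) (hgb : Bornology.IsBounded (Set.range g))
    (cf cg : Y)
    (hcf : ∀ z : Y, (∫ x, dist cf (f x) ^ 2 ∂μ) ≤ ∫ x, dist z (f x) ^ 2 ∂μ)
    (hcg : ∀ z : Y, (∫ x, dist cg (g x) ^ 2 ∂μ) ≤ ∫ x, dist z (g x) ^ 2 ∂μ) :
    dist cf cg ≤ ∫ x, dist (f x) (g x) ∂μ :=
  center_of_mass_contractive_general geo hgeo0 hgeo1 hgeodist hcat μ f g hf hg hfb hgb cf cg hcf hcg
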